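/- arXiv:1606.04145 — 4 statements merged into one kernel-verified Lean document; each statement's English description precedes it below -/
import Mathlib

section
/- Fix n, m, N ≥ 1, bounds 0 < H_w ≤ H_w̄, H_λ ≥ 0, H_v ≥ 0, and j ∈ [n]. Let L_j be the class of functions on n-bidder, m-item valuation vectors given by v ↦ (1/w_j)·max_{o∈𝒪} ( Σ_{ℓ≠j} w_ℓ v_ℓ(o_ℓ) + λ(o) ), ranging over all weights with H_w ≤ w_i ≤ H_w̄ and boosts with |λ(o)| ≤ H_λ. Then for any probability distribution D over valuation vectors v with 0 ≤ v_i(b) ≤ H_v for all i and b, the Rademacher complexity satisfies R_N(L_j) ≤ ( (n+1)^m · Ĥ_v · (n·H_w̄ + H_λ) / H_w ) · √( 2·log(n·2^m + 1) / N ), where Ĥ_v = max{H_v, 1}. -/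
open Finset MeasureTheory

/-- An `n`-bidder, `m`-item allocation: pairwise disjoint bundles of items. -/
def Alloc (n m : ℕ) : Type :=
  {o : Fin n → Finset (Fin m) // ∀ i j, i ≠ j → o i ∩ o j = ∅}

instance (n m : ℕ) : Inhabited (Alloc n m) :=
  ⟨⟨fun _ => ∅, fun _ _ _ => by simp⟩⟩

instance (n m : ℕ) : Fintype (Alloc n m) :=
  Subtype.fintype _

instance (n m : ℕ) : Nonempty (Alloc n m) := ⟨default⟩

/-- Maximum of a real-valued function over all allocations. -/
noncomputable def allocMax {n m : ℕ} (f : Alloc n m → ℝ) : ℝ :=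
  Finset.univ.sup' Finset.univ_nonempty f

/-- A fixed (canonical) maximizer of a real-valued function over all allocations. -/
noncomputable def chooseMax {n m : ℕ} (f : Alloc n m → ℝ) : Alloc n m :=
  Classical.choose (Finset.exists_max_image Finset.univ f Finset.univ_nonempty)

/-- `os` maximizes the boosted weighted social welfare. -/
def IsMaxAlloc {n m : ℕ} (w : Fin n → ℝ) (lam : Alloc n m → ℝ)
    (v : Fin n → Finset (Fin m) → ℝ) (os : Alloc n m) : Prop :=
  ∀ o : Alloc n m, (∑ j, w j * v j (o.1 j)) + lam o ≤ (∑ j, w j * v j (os.1 j)) + lam os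

/-- Revenue of the AMA with weights `w`, boosts `lam`, on valuations `v`, when the
chosen (welfare-maximizing) allocation is `os`. -/
noncomputable def amaRev {n m : ℕ} (w : Fin n → ℝ) (lam : Alloc n m → ℝ)
    (v : Fin n → Finset (Fin m) → ℝ) (os : Alloc n m) : ℝ :=
  ∑ j, (w j)⁻¹ *
    (allocMax (fun o => (∑ l ∈ Finset.univ.erase j, w l * v l (o.1 l)) + lam o)
      - ((∑ l ∈ Finset.univ.erase j, w l * v l (os.1 l)) + lam os))

/-- The boosts of the `c`-MBA. -/
def mbaLam {n m : ℕ} (c : ℝ) : Alloc n m → ℝ :=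
  fun o => if ∃ i, o.1 i = Finset.univ then c else 0

/-- Revenue of the `c`-MBA (with a fixed tie-breaking rule). -/
noncomputable def mbaRev {n m : ℕ} (v : Fin n → Finset (Fin m) → ℝ) (c : ℝ) : ℝ :=
  amaRev (fun _ => 1) (mbaLam c) v
    (chooseMax fun o => (∑ j, v j (o.1 j)) + mbaLam c o)

/-- Revenue of the MBARP with grand-bundle boost `c` and item reserve prices `r`
(with a fixed tie-breaking rule); the seller participates as bidder `0`. -/
noncomputable def mbarpRev {n m : ℕ} (v : Fin n → Finset (Fin m) → ℝ) (c : ℝ)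
    (r : Fin m → ℝ) : ℝ :=
  let vx : Fin (n + 1) → Finset (Fin m) → ℝ :=
    fun i b => Fin.cases (∑ j ∈ b, r j) (fun i' => v i' b) i
  let g : Fin (n + 1) → Alloc (n + 1) m → ℝ :=
    fun i o => (∑ l ∈ Finset.univ.erase i, vx l (o.1 l)) + mbaLam c o
  let os : Alloc (n + 1) m := chooseMax fun o => (∑ i, vx i (o.1 i)) + mbaLam c o
  ∑ i : Fin n, (allocMax (g i.succ) - g i.succ os)

/-- Empirical Rademacher complexity of a class `F` on the sample `S`. -/
noncomputable def empRad {X : Type*} (F : Set (X → ℝ)) {N : ℕ} (S : Fin N → X) : ℝ :=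
  ((2 : ℝ) ^ N)⁻¹ * ∑ σ : Fin N → Bool,
    ⨆ f ∈ F, (N : ℝ)⁻¹ * ∑ i, (if σ i then (1 : ℝ) else -1) * f (S i)

/-- Rademacher complexity: expected empirical Rademacher complexity over i.i.d. samples. -/
noncomputable def radComp {X : Type*} [MeasurableSpace X] (D : Measure X)
    (F : Set (X → ℝ)) (N : ℕ) : ℝ :=
  ∫ S, empRad F S ∂(Measure.pi fun _ : Fin N => D)

/-- Pseudo-shattering of the tuple `x` by the class `F`, with witnesses `z`. -/
def PShatters {X : Type*} (F : Set (X → ℝ)) {k : ℕ} (x : Fin k → X) : Prop :=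
  ∃ z : Fin k → ℝ, ∀ T : Finset (Fin k), ∃ f ∈ F,
    (∀ i, i ∈ T → f (x i) ≤ z i) ∧ (∀ i, i ∉ T → z i < f (x i))

/-- A valuation is additive if it is determined by its values on singletons. -/
def AdditiveVal {n m : ℕ} (v : Fin n → Finset (Fin m) → ℝ) : Prop :=
  ∀ i b, v i b = ∑ j ∈ b, v i {j}

/-- Valuation vectors with values in `[0, Hv]` (and zero on the empty bundle). -/
abbrev ValB (n m : ℕ) (Hv : ℝ) : Type :=
  {v : Fin n → Finset (Fin m) → ℝ // (∀ i, v i ∅ = 0) ∧ ∀ i b, 0 ≤ v i b ∧ v i b ≤ Hv}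

/-- The class `L_j`: `v ↦ (1/w_j)·max_{o∈𝒪} (Σ_{ℓ≠j} w_ℓ v_ℓ(o_ℓ) + λ(o))`,
over all admissible weights and boosts. -/
def LjClass (n m : ℕ) (Hw Hwb Hlam Hv : ℝ) (j : Fin n) : Set (ValB n m Hv → ℝ) :=
  {f | ∃ (w : Fin n → ℝ) (lam : Alloc n m → ℝ),
    (∀ i, Hw ≤ w i ∧ w i ≤ Hwb) ∧ (∀ o, |lam o| ≤ Hlam) ∧
    f = fun v => (w j)⁻¹ *
      allocMax (fun o => (∑ l ∈ Finset.univ.erase j, w l * v.1 l (o.1 l)) + lam o)}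

/-!
Dividing by `w_j`, every function in `L_j` has the form `v ↦ max_o (∑_{l ≠ j} a_l v_l(o_l) + c_o)`
with `|a_l| ≤ H_w̄ / H_w` and `|c_o| ≤ H_λ / H_w`, and these functions form a uniformly bounded
family. Writing `max x y = (x + y + |x - y|) / 2`, the Ledoux–Talagrand
contraction inequality shows that the Rademacher complexity of a pointwise maximum is at most the
sum of the complexities of its terms, so the maximum over the at most `(n + 1) ^ m` allocations
costs a factor `(n + 1) ^ m`. For a fixed allocation the family is affine in the parameters, and
Khintchine's inequality `E_σ |∑ σ_i x_i| ≤ ‖x‖₂` bounds its complexity by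
`(n H_w̄ H_v + H_λ) / (H_w √N)`. Finally `1 ≤ 2 log 2 ≤ 2 log (n 2^m + 1)`.
-/

section Rademacher

variable {N : ℕ}

def radSign (σ : Fin N → Bool) (i : Fin N) : ℝ := if σ i then 1 else -1

lemma abs_radSign (σ : Fin N → Bool) (i : Fin N) : |radSign σ i| = 1 := by
  unfold radSign; split <;> simp

lemma radSign_mul_self (σ : Fin N → Bool) (i : Fin N) : radSign σ i * radSign σ i = 1 := by
  unfold radSign; split <;> norm_num

lemma radSign_not (σ : Fin N → Bool) (i : Fin N) : radSign (fun i => !σ i) i = -radSign σ i := by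
  unfold radSign; cases h : σ i <;> simp [h]

def flipAt (k : Fin N) (σ : Fin N → Bool) : Fin N → Bool := Function.update σ k (!σ k)

lemma flipAt_involutive (k : Fin N) : Function.Involutive (flipAt k) := by
  intro σ; ext i
  by_cases h : i = k
  · subst h; simp [flipAt]
  · simp [flipAt, Function.update_of_ne h]

lemma radSign_flipAt_self (k : Fin N) (σ : Fin N → Bool) :
    radSign (flipAt k σ) k = -radSign σ k := by
  unfold radSign flipAt; cases σ k <;> simp

lemma radSign_flipAt_of_ne {i k : Fin N} (h : i ≠ k) (σ : Fin N → Bool) :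
    radSign (flipAt k σ) i = radSign σ i := by
  simp only [radSign, flipAt, Function.update_of_ne h]

lemma sum_comp_flipAt {M : Type*} [AddCommMonoid M] (k : Fin N) (F : (Fin N → Bool) → M) :
    ∑ σ, F (flipAt k σ) = ∑ σ, F σ :=
  Equiv.sum_comp ((flipAt_involutive k).toPerm _) F

lemma sum_le_sum_of_add_comp_flipAt_le (k : Fin N) {F G : (Fin N → Bool) → ℝ}
    (h : ∀ σ, F σ + F (flipAt k σ) ≤ G σ + G (flipAt k σ)) : ∑ σ, F σ ≤ ∑ σ, G σ := by
  have := sum_le_sum fun σ (_ : σ ∈ univ) => h σ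
  rw [sum_add_distrib, sum_add_distrib, sum_comp_flipAt, sum_comp_flipAt] at this
  linarith

lemma sum_radSign_mul_radSign (i k : Fin N) :
    ∑ σ : Fin N → Bool, radSign σ i * radSign σ k = if i = k then 2 ^ N else 0 := by
  split_ifs with h
  · subst h; simp [radSign_mul_self]
  · have := sum_comp_flipAt k fun σ => radSign σ i * radSign σ k
    simp only [radSign_flipAt_of_ne h, radSign_flipAt_self, mul_neg, sum_neg_distrib] at this
    linarith

lemma sum_sq_sum_radSign_mul (x : Fin N → ℝ) :
    ∑ σ : Fin N → Bool, (∑ i, radSign σ i * x i) ^ 2 = 2 ^ N * ∑ i, x i ^ 2 := by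
  calc ∑ σ : Fin N → Bool, (∑ i, radSign σ i * x i) ^ 2
      = ∑ i, ∑ k, x i * x k * ∑ σ : Fin N → Bool, radSign σ i * radSign σ k := by
        simp_rw [sq, sum_mul_sum, mul_sum]
        rw [sum_comm]
        refine sum_congr rfl fun i _ => ?_
        rw [sum_comm]
        exact sum_congr rfl fun k _ => sum_congr rfl fun σ _ => by ring
    _ = 2 ^ N * ∑ i, x i ^ 2 := by
        simp [sum_radSign_mul_radSign, mul_sum, sq, mul_comm]

/-- Khintchine's inequality with constant `1`, from Cauchy–Schwarz and the second moment. -/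
theorem sum_abs_sum_radSign_mul_le (x : Fin N → ℝ) :
    ∑ σ : Fin N → Bool, |∑ i, radSign σ i * x i| ≤ 2 ^ N * √(∑ i, x i ^ 2) := by
  have hcs := sq_sum_le_card_mul_sum_sq (s := (univ : Finset (Fin N → Bool)))
    (f := fun σ => |∑ i, radSign σ i * x i|)
  simp only [sq_abs, sum_sq_sum_radSign_mul, card_univ, Fintype.card_fun, Fintype.card_bool,
    Fintype.card_fin] at hcs
  rw [← Real.sqrt_sq (by positivity : (0 : ℝ) ≤ 2 ^ N), ← Real.sqrt_mul (by positivity)]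
  refine (le_abs_self _).trans (Real.abs_le_sqrt ?_)
  push_cast at hcs
  linarith

lemma sum_abs_sum_radSign_mul_le_of_abs_le {x : Fin N → ℝ} {X : ℝ} (hx : ∀ i, |x i| ≤ X) :
    ∑ σ : Fin N → Bool, |∑ i, radSign σ i * x i| ≤ 2 ^ N * (X * √N) := by
  rcases Nat.eq_zero_or_pos N with rfl | hN
  · simp
  have hX : 0 ≤ X := (abs_nonneg _).trans (hx ⟨0, hN⟩)
  have hsq : ∑ i, x i ^ 2 ≤ X ^ 2 * N :=
    calc ∑ i, x i ^ 2 ≤ ∑ _i : Fin N, X ^ 2 :=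
          sum_le_sum fun i _ => by rw [← sq_abs]; exact pow_le_pow_left₀ (abs_nonneg _) (hx i) 2
      _ = X ^ 2 * N := by simp [mul_comm]
  calc _ ≤ 2 ^ N * √(∑ i, x i ^ 2) := sum_abs_sum_radSign_mul_le x
    _ ≤ 2 ^ N * √(X ^ 2 * N) := by gcongr
    _ = 2 ^ N * (X * √N) := by rw [Real.sqrt_mul (sq_nonneg X), Real.sqrt_sq hX]

end Rademacher

section RadSum

variable {N : ℕ} {Θ : Type*}

/-- `2 ^ N` times the empirical Rademacher complexity of the vectors `t θ`, `θ : Θ`. -/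
noncomputable def radSum (t : Θ → Fin N → ℝ) : ℝ :=
  ∑ σ : Fin N → Bool, ⨆ θ, ∑ i, radSign σ i * t θ i

lemma bddAbove_range_sum_radSign_mul {t : Θ → Fin N → ℝ} {C : ℝ} (ht : ∀ θ i, |t θ i| ≤ C)
    (σ : Fin N → Bool) : BddAbove (Set.range fun θ => ∑ i, radSign σ i * t θ i) := by
  refine ⟨N * C, ?_⟩
  rintro _ ⟨θ, rfl⟩
  calc ∑ i, radSign σ i * t θ i ≤ ∑ _i : Fin N, C := sum_le_sum fun i _ =>
        (le_abs_self _).trans (by rw [abs_mul, abs_radSign, one_mul]; exact ht θ i)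
    _ = N * C := by simp

lemma iSup_add_comp_add_iSup_sub_comp_le [Nonempty Θ] {φ : ℝ → ℝ} (hφ : LipschitzWith 1 φ)
    (b r : Θ → ℝ) (hbdd₁ : BddAbove (Set.range fun θ => b θ + r θ))
    (hbdd₂ : BddAbove (Set.range fun θ => b θ - r θ)) :
    (⨆ θ, b θ + φ (r θ)) + ⨆ θ, b θ - φ (r θ) ≤ (⨆ θ, b θ + r θ) + ⨆ θ, b θ - r θ := by
  refine ciSup_add_ciSup_le fun θ θ' => ?_
  have hφ' : φ (r θ) - φ (r θ') ≤ |r θ - r θ'| := by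
    have := hφ.dist_le_mul (r θ) (r θ')
    simp only [Real.dist_eq, NNReal.coe_one, one_mul] at this
    exact (le_abs_self _).trans this
  rcases abs_cases (r θ - r θ') with ⟨h, _⟩ | ⟨h, _⟩
  · linarith [le_ciSup hbdd₁ θ, le_ciSup hbdd₂ θ']
  · linarith [le_ciSup hbdd₁ θ', le_ciSup hbdd₂ θ]

/-- Pairing `σ` with `flipAt k σ` reduces this to `iSup_add_comp_add_iSup_sub_comp_le`. -/
lemma radSum_update_comp_le [Nonempty Θ] {φ : ℝ → ℝ} (hφ : LipschitzWith 1 φ)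
    {t : Θ → Fin N → ℝ} {C : ℝ} (ht : ∀ θ i, |t θ i| ≤ C) (k : Fin N) :
    radSum (fun θ => Function.update (t θ) k (φ (t θ k))) ≤ radSum t := by
  set b : Θ → (Fin N → Bool) → ℝ := fun θ σ => ∑ i ∈ univ.erase k, radSign σ i * t θ i
  have hb : ∀ θ σ, b θ (flipAt k σ) = b θ σ := fun θ σ =>
    sum_congr rfl fun i hi => by rw [radSign_flipAt_of_ne (ne_of_mem_erase hi)]
  have hsplit : ∀ σ (x : Fin N → ℝ), ∑ i, radSign σ i * x i
      = radSign σ k * x k + ∑ i ∈ univ.erase k, radSign σ i * x i :=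
    fun σ x => (add_sum_erase _ _ (mem_univ k)).symm
  have hφt : ∀ θ σ, ∑ i, radSign σ i * Function.update (t θ) k (φ (t θ k)) i
      = b θ σ + radSign σ k * φ (t θ k) := by
    intro θ σ
    rw [hsplit, Function.update_self, add_comm]
    congr 1
    exact sum_congr rfl fun i hi => by rw [Function.update_of_ne (ne_of_mem_erase hi)]
  have ht' : ∀ θ σ, ∑ i, radSign σ i * t θ i = b θ σ + radSign σ k * t θ k :=
    fun θ σ => by rw [hsplit, add_comm]
  have key : ∀ σ, σ k = true →
      (⨆ θ, b θ σ + radSign σ k * φ (t θ k))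
        + (⨆ θ, b θ (flipAt k σ) + radSign (flipAt k σ) k * φ (t θ k))
      ≤ (⨆ θ, b θ σ + radSign σ k * t θ k)
        + ⨆ θ, b θ (flipAt k σ) + radSign (flipAt k σ) k * t θ k := by
    intro σ hσ
    have h₁ : radSign σ k = 1 := by simp [radSign, hσ]
    have h₂ : radSign (flipAt k σ) k = -1 := by rw [radSign_flipAt_self, h₁]
    have hbdd₁ := bddAbove_range_sum_radSign_mul ht σ
    have hbdd₂ := bddAbove_range_sum_radSign_mul ht (flipAt k σ)
    simp only [ht', hb, h₁, h₂, one_mul, neg_one_mul, ← sub_eq_add_neg] at hbdd₁ hbdd₂ ⊢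
    exact iSup_add_comp_add_iSup_sub_comp_le hφ _ _ hbdd₁ hbdd₂
  unfold radSum
  simp only [hφt, ht']
  refine sum_le_sum_of_add_comp_flipAt_le k fun σ => ?_
  cases hσ : σ k
  · have := key (flipAt k σ) (by simp [flipAt, hσ])
    rw [flipAt_involutive k σ] at this
    linarith
  · exact key σ hσ

/-- The Ledoux–Talagrand contraction inequality. -/
theorem radSum_comp_le [Nonempty Θ] {φ : ℝ → ℝ} (hφ : LipschitzWith 1 φ)
    {t : Θ → Fin N → ℝ} {C : ℝ} (ht : ∀ θ i, |t θ i| ≤ C) :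
    radSum (fun θ i => φ (t θ i)) ≤ radSum t := by
  classical
  have hφC : ∀ x, |x| ≤ C → |φ x| ≤ |φ 0| + C := fun x hx => by
    have := hφ.dist_le_mul x 0
    simp only [Real.dist_eq, NNReal.coe_one, one_mul, sub_zero] at this
    linarith [abs_sub_abs_le_abs_sub (φ x) (φ 0)]
  let ts : Finset (Fin N) → Θ → Fin N → ℝ := fun s θ i => if i ∈ s then φ (t θ i) else t θ i
  have hts : ∀ s θ i, |ts s θ i| ≤ |φ 0| + C := fun s θ i => by
    by_cases hi : i ∈ s
    · simpa [ts, hi] using hφC _ (ht θ i)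
    · simpa [ts, hi] using (ht θ i).trans (le_add_of_nonneg_left (abs_nonneg _))
  suffices ∀ s, radSum (ts s) ≤ radSum t by simpa [ts] using this univ
  intro s
  induction s using Finset.induction_on with
  | empty => simp [ts]
  | insert k s hk ih =>
    refine le_trans (le_of_eq ?_) ((radSum_update_comp_le hφ (hts s) k).trans ih)
    congr 1; funext θ i
    by_cases hi : i = k
    · subst hi; simp [ts, hk]
    · simp [ts, hi]

lemma radSum_neg (t : Θ → Fin N → ℝ) : radSum (-t) = radSum t := by
  have hnot : Function.Involutive fun σ : Fin N → Bool => fun i => !σ i := fun σ => by simp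
  unfold radSum
  rw [← Equiv.sum_comp (hnot.toPerm _)]
  refine sum_congr rfl fun σ _ => iSup_congr fun θ => sum_congr rfl fun i _ => ?_
  simp [radSign_not]

lemma radSum_add_le [Nonempty Θ] {t u : Θ → Fin N → ℝ} {C D : ℝ} (ht : ∀ θ i, |t θ i| ≤ C)
    (hu : ∀ θ i, |u θ i| ≤ D) : radSum (t + u) ≤ radSum t + radSum u := by
  unfold radSum
  rw [← sum_add_distrib]
  refine sum_le_sum fun σ _ => ciSup_le fun θ => ?_
  simp only [Pi.add_apply, mul_add, sum_add_distrib]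
  exact add_le_add (le_ciSup (bddAbove_range_sum_radSign_mul ht σ) θ)
    (le_ciSup (bddAbove_range_sum_radSign_mul hu σ) θ)

lemma radSum_smul {c : ℝ} (hc : 0 ≤ c) (t : Θ → Fin N → ℝ) : radSum (c • t) = c * radSum t := by
  unfold radSum
  rw [mul_sum]
  refine sum_congr rfl fun σ _ => ?_
  rw [Real.mul_iSup_of_nonneg hc]
  refine iSup_congr fun θ => ?_
  simp only [Pi.smul_apply, smul_eq_mul, mul_sum]
  exact sum_congr rfl fun i _ => by ring

theorem radSum_max_le [Nonempty Θ] {t u : Θ → Fin N → ℝ} {C : ℝ} (ht : ∀ θ i, |t θ i| ≤ C)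
    (hu : ∀ θ i, |u θ i| ≤ C) :
    radSum (fun θ i => max (t θ i) (u θ i)) ≤ radSum t + radSum u := by
  have hsub : ∀ θ i, |(u - t) θ i| ≤ C + C := fun θ i =>
    (abs_sub _ _).trans (add_le_add (hu θ i) (ht θ i))
  have hneg : ∀ θ i, |(-t) θ i| ≤ C := fun θ i => by simpa using ht θ i
  have habs : ∀ θ i, |(|(u - t) θ i|)| ≤ C + C := fun θ i => (abs_abs _).trans_le (hsub θ i)
  have hadd : ∀ θ i, |(t + u) θ i| ≤ C + C := fun θ i =>
    (abs_add_le _ _).trans (add_le_add (ht θ i) (hu θ i))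
  have htwo : (2 : ℝ) • (fun θ i => max (t θ i) (u θ i)) = (t + u) + fun θ i => |(u - t) θ i| := by
    funext θ i
    have := two_nsmul_sup_eq_add_add_abs_sub (t θ i) (u θ i)
    simp only [two_nsmul] at this
    simp only [Pi.smul_apply, Pi.add_apply, Pi.sub_apply, smul_eq_mul]
    linarith
  have : 2 * radSum (fun θ i => max (t θ i) (u θ i)) ≤ 2 * (radSum t + radSum u) :=
    calc 2 * radSum (fun θ i => max (t θ i) (u θ i))
        = radSum ((t + u) + fun θ i => |(u - t) θ i|) := by rw [← radSum_smul two_pos.le, htwo]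
      _ ≤ radSum (t + u) + radSum (u - t) :=
          (radSum_add_le hadd habs).trans (add_le_add le_rfl (radSum_comp_le
            (LipschitzWith.of_dist_le_mul fun x y => by
              simpa [Real.dist_eq] using abs_abs_sub_abs_le_abs_sub x y) hsub))
      _ ≤ (radSum t + radSum u) + (radSum u + radSum (-t)) := by
          rw [sub_eq_add_neg]
          exact add_le_add (radSum_add_le ht hu) (radSum_add_le hu hneg)
      _ = 2 * (radSum t + radSum u) := by rw [radSum_neg]; ring
  linarith

lemma abs_sup'_le {O : Type*} {s : Finset O} (hs : s.Nonempty) {f : O → ℝ} {C : ℝ}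
    (hf : ∀ o, |f o| ≤ C) : |s.sup' hs f| ≤ C := by
  obtain ⟨o, ho⟩ := hs
  exact abs_le.mpr ⟨(abs_le.mp (hf o)).1.trans (le_sup' f ho),
    sup'_le _ _ fun o _ => (abs_le.mp (hf o)).2⟩

theorem radSum_sup'_le [Nonempty Θ] {O : Type*} {s : Finset O} (hs : s.Nonempty)
    (t : O → Θ → Fin N → ℝ) {C : ℝ} (ht : ∀ o θ i, |t o θ i| ≤ C) :
    radSum (fun θ i => s.sup' hs fun o => t o θ i) ≤ ∑ o ∈ s, radSum (t o) := by
  induction hs using Finset.Nonempty.cons_induction with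
  | singleton a => simp
  | cons a s ha hs ih =>
    simp only [sup'_cons hs, sum_cons]
    exact (radSum_max_le (ht a) fun θ i => abs_sup'_le hs fun o => ht o θ i).trans
      (add_le_add le_rfl ih)

end RadSum

section AffineMaxima

variable {N : ℕ} {Θ ι : Type*}

lemma abs_sum_mul_add_le (s : Finset ι) {a x : ι → ℝ} {c A B X : ℝ} (ha : ∀ l, |a l| ≤ A)
    (hx : ∀ l, |x l| ≤ X) (hc : |c| ≤ B) : |∑ l ∈ s, a l * x l + c| ≤ #s * A * X + B :=
  calc |∑ l ∈ s, a l * x l + c| ≤ ∑ l ∈ s, |a l * x l| + |c| :=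
        (abs_add_le _ _).trans (add_le_add (abs_sum_le_sum_abs _ _) le_rfl)
    _ ≤ ∑ _l ∈ s, A * X + B := by
        gcongr with l
        rw [abs_mul]
        exact mul_le_mul (ha l) (hx l) (abs_nonneg _) ((abs_nonneg _).trans (ha l))
    _ = #s * A * X + B := by simp [mul_assoc]

theorem radSum_affine_le [Nonempty Θ] (s : Finset ι) (a : Θ → ι → ℝ) (c : Θ → ℝ)
    (x : ι → Fin N → ℝ) {A B X : ℝ} (ha : ∀ θ l, |a θ l| ≤ A) (hc : ∀ θ, |c θ| ≤ B)
    (hx : ∀ l i, |x l i| ≤ X) :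
    radSum (fun θ i => ∑ l ∈ s, a θ l * x l i + c θ) ≤ 2 ^ N * ((#s * A * X + B) * √N) := by
  have hB : 0 ≤ B := (abs_nonneg _).trans (hc (Classical.arbitrary Θ))
  have hσ : ∀ σ, (⨆ θ, ∑ i, radSign σ i * (∑ l ∈ s, a θ l * x l i + c θ))
      ≤ ∑ l ∈ s, A * |∑ i, radSign σ i * x l i| + B * |∑ i, radSign σ i * 1| := by
    intro σ
    refine ciSup_le fun θ => ?_
    have hlin : ∑ i, radSign σ i * (∑ l ∈ s, a θ l * x l i + c θ)
        = ∑ l ∈ s, a θ l * ∑ i, radSign σ i * x l i + c θ * ∑ i, radSign σ i * 1 := by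
      simp only [mul_add, sum_add_distrib, mul_sum, mul_one]
      rw [sum_comm]
      congr 1
      · exact sum_congr rfl fun l _ => sum_congr rfl fun i _ => by ring
      · exact sum_congr rfl fun i _ => by ring
    have hmul : ∀ {y z C : ℝ}, |y| ≤ C → y * z ≤ C * |z| := fun hy =>
      (le_abs_self _).trans (by rw [abs_mul]; exact mul_le_mul_of_nonneg_right hy (abs_nonneg _))
    rw [hlin]
    exact add_le_add (sum_le_sum fun l _ => hmul (ha θ l)) (hmul (hc θ))
  calc radSum (fun θ i => ∑ l ∈ s, a θ l * x l i + c θ)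
      ≤ ∑ σ : Fin N → Bool, (∑ l ∈ s, A * |∑ i, radSign σ i * x l i|
          + B * |∑ i, radSign σ i * 1|) := sum_le_sum fun σ _ => hσ σ
    _ = ∑ l ∈ s, A * ∑ σ : Fin N → Bool, |∑ i, radSign σ i * x l i|
          + B * ∑ σ : Fin N → Bool, |∑ i, radSign σ i * 1| := by
        rw [sum_add_distrib, sum_comm, mul_sum]
        simp only [mul_sum]
    _ ≤ ∑ _l ∈ s, A * (2 ^ N * (X * √N)) + B * (2 ^ N * (1 * √N)) := by
        refine add_le_add (sum_le_sum fun l _ => ?_) ?_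
        · exact mul_le_mul_of_nonneg_left (sum_abs_sum_radSign_mul_le_of_abs_le (hx l))
            ((abs_nonneg _).trans (ha (Classical.arbitrary Θ) l))
        · exact mul_le_mul_of_nonneg_left
            (sum_abs_sum_radSign_mul_le_of_abs_le fun _ => abs_one.le) hB
    _ = 2 ^ N * ((#s * A * X + B) * √N) := by simp only [sum_const, nsmul_eq_mul]; ring

theorem radSum_sup'_affine_le [Nonempty Θ] {O : Type*} [Fintype O] [Nonempty O] (s : Finset ι)
    (a : Θ → ι → ℝ) (c : Θ → O → ℝ) (x : O → ι → Fin N → ℝ) {A B X : ℝ}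
    (ha : ∀ θ l, |a θ l| ≤ A) (hc : ∀ θ o, |c θ o| ≤ B) (hx : ∀ o l i, |x o l i| ≤ X) :
    radSum (fun θ i => univ.sup' univ_nonempty fun o => ∑ l ∈ s, a θ l * x o l i + c θ o)
      ≤ Fintype.card O * (2 ^ N * ((#s * A * X + B) * √N)) :=
  calc _ ≤ ∑ o, radSum (fun θ i => ∑ l ∈ s, a θ l * x o l i + c θ o) :=
        radSum_sup'_le _ _ fun o θ i =>
          abs_sum_mul_add_le s (ha θ) (fun l => hx o l i) (hc θ o)
    _ ≤ ∑ _o : O, 2 ^ N * ((#s * A * X + B) * √N) :=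
        sum_le_sum fun o _ => radSum_affine_le s a (c · o) (x o) ha (hc · o) (hx o)
    _ = _ := by simp

end AffineMaxima

lemma card_alloc_le (n m : ℕ) : Fintype.card (Alloc n m) ≤ (n + 1) ^ m := by
  classical
  let owner : Alloc n m → Fin m → WithTop (Fin n) := fun o x =>
    (univ.filter fun i => x ∈ o.1 i).min
  have mem_iff : ∀ o x (i : Fin n), x ∈ o.1 i ↔ owner o x = i := by
    intro o x i
    refine ⟨fun hx => ?_, fun h => by simpa using mem_of_min h⟩
    have : (univ.filter fun i' => x ∈ o.1 i') = {i} := by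
      ext i'
      simp only [mem_filter, mem_univ, true_and, mem_singleton]
      refine ⟨fun hx' => by_contra fun hne => ?_, fun h => h ▸ hx⟩
      simpa [o.2 i' i hne] using mem_inter.mpr ⟨hx', hx⟩
    simp [owner, this]
  have hinj : Function.Injective owner := fun o o' h =>
    Subtype.ext <| funext fun i => Finset.ext fun x => by rw [mem_iff, mem_iff, h]
  have hcard : Fintype.card (WithTop (Fin n)) = n + 1 := by
    rw [← Nat.card_eq_fintype_card]; simp [WithTop]
  simpa [hcard] using Fintype.card_le_of_injective owner hinj

lemma empRad_le_radSum {X Θ : Type*} (F : Set (X → ℝ)) (g : Θ → X → ℝ)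
    (hF : F ⊆ Set.range g) {θ₀ : Θ} (hθ₀ : g θ₀ = 0) {C : ℝ} (hg : ∀ θ x, |g θ x| ≤ C)
    {N : ℕ} (S : Fin N → X) :
    empRad F S ≤ ((2 : ℝ) ^ N)⁻¹ * ((N : ℝ)⁻¹ * radSum fun θ i => g θ (S i)) := by
  unfold empRad radSum
  refine mul_le_mul_of_nonneg_left ?_ (by positivity)
  rw [mul_sum]
  refine sum_le_sum fun σ _ => ?_
  have hbdd := bddAbove_range_sum_radSign_mul (t := fun θ i => g θ (S i)) (fun θ i => hg θ _) σ
  -- `⨆ f ∈ F, _` also ranges over `f ∉ F` with the junk value `0`; `θ₀` dominates it.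
  have h₀ : 0 ≤ (N : ℝ)⁻¹ * ⨆ θ, ∑ i, radSign σ i * g θ (S i) :=
    mul_nonneg (by positivity) (by simpa [hθ₀] using le_ciSup hbdd θ₀)
  refine Real.iSup_le (fun f => Real.iSup_le (fun hf => ?_) h₀) h₀
  obtain ⟨θ, rfl⟩ := hF hf
  exact mul_le_mul_of_nonneg_left (le_ciSup hbdd θ) (by positivity)

lemma integral_le_of_forall_le_of_nonneg {Ω : Type*} [MeasurableSpace Ω] (μ : Measure Ω)
    [IsProbabilityMeasure μ] {f : Ω → ℝ} {c : ℝ} (hf : ∀ ω, f ω ≤ c) (hc : 0 ≤ c) :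
    ∫ ω, f ω ∂μ ≤ c := by
  by_cases hint : Integrable f μ
  · simpa using integral_mono hint (integrable_const c) hf
  · rw [integral_undef hint]
    exact hc

section LjClass

variable {n m : ℕ}

lemma ValB.abs_apply_le {Hv : ℝ} (v : ValB n m Hv) (l : Fin n) (b : Finset (Fin m)) :
    |v.1 l b| ≤ Hv :=
  abs_le.mpr ⟨by linarith [v.2.2 l b], (v.2.2 l b).2⟩

def AffineParams (n m : ℕ) (A B : ℝ) : Type :=
  {p : (Fin n → ℝ) × (Alloc n m → ℝ) // (∀ l, |p.1 l| ≤ A) ∧ ∀ o, |p.2 o| ≤ B}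

namespace AffineParams

variable {A B : ℝ}

noncomputable def maxFun (j : Fin n) (θ : AffineParams n m A B)
    (v : Fin n → Finset (Fin m) → ℝ) : ℝ :=
  allocMax fun o => ∑ l ∈ univ.erase j, θ.1.1 l * v l (o.1 l) + θ.1.2 o

def zero (hA : 0 ≤ A) (hB : 0 ≤ B) : AffineParams n m A B :=
  ⟨(0, 0), fun _ => by simpa using hA, fun _ => by simpa using hB⟩

lemma maxFun_zero (hA : 0 ≤ A) (hB : 0 ≤ B) (j : Fin n) (v : Fin n → Finset (Fin m) → ℝ) :
    (zero hA hB).maxFun j v = 0 := by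
  simp [maxFun, zero, allocMax]

lemma abs_maxFun_le {Hv : ℝ} (j : Fin n) (θ : AffineParams n m A B) (v : ValB n m Hv) :
    |θ.maxFun j v.1| ≤ #(univ.erase j) * A * Hv + B :=
  abs_sup'_le univ_nonempty fun o =>
    abs_sum_mul_add_le _ θ.2.1 (fun l => v.abs_apply_le l (o.1 l)) (θ.2.2 o)

end AffineParams

lemma LjClass_subset_range_maxFun {Hw Hwb Hlam Hv : ℝ} (hHw : 0 < Hw) (j : Fin n) :
    LjClass n m Hw Hwb Hlam Hv j ⊆
      Set.range fun (θ : AffineParams n m (Hwb / Hw) (Hlam / Hw)) (v : ValB n m Hv) =>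
        θ.maxFun j v.1 := by
  rintro _ ⟨w, lam, hw, hlam, rfl⟩
  have hwpos : ∀ l, 0 < w l := fun l => hHw.trans_le (hw l).1
  have hinv : (w j)⁻¹ ≤ Hw⁻¹ := inv_anti₀ hHw (hw j).1
  have hwinv : 0 < (w j)⁻¹ := inv_pos.mpr (hwpos j)
  refine ⟨⟨(fun l => (w j)⁻¹ * w l, fun o => (w j)⁻¹ * lam o), fun l => ?_, fun o => ?_⟩, ?_⟩
  · rw [abs_of_pos (mul_pos hwinv (hwpos l)), div_eq_mul_inv, mul_comm Hwb]
    exact mul_le_mul hinv (hw l).2 (hwpos l).le (inv_nonneg.mpr hHw.le)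
  · rw [abs_mul, abs_of_pos hwinv, div_eq_mul_inv, mul_comm Hlam]
    exact mul_le_mul hinv (hlam o) (abs_nonneg _) (inv_nonneg.mpr hHw.le)
  · funext v
    simp only [AffineParams.maxFun, allocMax, mul₀_sup' hwinv.le, mul_add, mul_sum, mul_assoc]

theorem empRad_LjClass_le {N : ℕ} {Hw Hwb Hlam Hv : ℝ} (hHw : 0 < Hw) (hw : Hw ≤ Hwb)
    (hl : 0 ≤ Hlam) (hv : 0 ≤ Hv) (j : Fin n) (S : Fin N → ValB n m Hv) :
    empRad (LjClass n m Hw Hwb Hlam Hv j) S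
      ≤ ((n : ℝ) + 1) ^ m * ((n * Hwb * Hv + Hlam) / Hw) / √N := by
  have hA : 0 ≤ Hwb / Hw := div_nonneg (hHw.le.trans hw) hHw.le
  have hB : 0 ≤ Hlam / Hw := div_nonneg hl hHw.le
  have hs : (#(univ.erase j) : ℝ) ≤ n := by
    exact_mod_cast (card_erase_le).trans (card_univ.trans (Fintype.card_fin n)).le
  have hcard : (Fintype.card (Alloc n m) : ℝ) ≤ ((n : ℝ) + 1) ^ m := by
    exact_mod_cast card_alloc_le n m
  calc empRad (LjClass n m Hw Hwb Hlam Hv j) S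
      ≤ ((2 : ℝ) ^ N)⁻¹ * ((N : ℝ)⁻¹ *
          radSum fun (θ : AffineParams n m (Hwb / Hw) (Hlam / Hw)) i => θ.maxFun j (S i).1) :=
        empRad_le_radSum _ _ (LjClass_subset_range_maxFun hHw j)
          (funext (AffineParams.maxFun_zero hA hB j ·.1)) (AffineParams.abs_maxFun_le j) S
    _ ≤ ((2 : ℝ) ^ N)⁻¹ * ((N : ℝ)⁻¹ * (Fintype.card (Alloc n m) *
          (2 ^ N * ((#(univ.erase j) * (Hwb / Hw) * Hv + Hlam / Hw) * √N)))) := by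
        have : Nonempty (AffineParams n m (Hwb / Hw) (Hlam / Hw)) := ⟨.zero hA hB⟩
        refine mul_le_mul_of_nonneg_left (mul_le_mul_of_nonneg_left ?_ (by positivity))
          (by positivity)
        have hx : ∀ (o : Alloc n m) l i, |(S i).1 l (o.1 l)| ≤ Hv :=
          fun o l i => (S i).abs_apply_le l (o.1 l)
        exact radSum_sup'_affine_le (Θ := AffineParams n m (Hwb / Hw) (Hlam / Hw))
          (univ.erase j) (fun θ l => θ.1.1 l) (fun θ o => θ.1.2 o) _ (fun θ => θ.2.1)
          (fun θ => θ.2.2) hx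
    _ ≤ ((2 : ℝ) ^ N)⁻¹ * ((N : ℝ)⁻¹ * (((n : ℝ) + 1) ^ m *
          (2 ^ N * ((n * (Hwb / Hw) * Hv + Hlam / Hw) * √N)))) := by
        gcongr
    _ = ((n : ℝ) + 1) ^ m * ((n * Hwb * Hv + Hlam) / Hw) * (√N / N) := by
        field_simp
    _ = ((n : ℝ) + 1) ^ m * ((n * Hwb * Hv + Hlam) / Hw) / √N := by
        rw [Real.sqrt_div_self, ← div_eq_mul_inv]

end LjClass

theorem stmt5_general (n m N : ℕ) (hn : 1 ≤ n)
    (Hw Hwb Hlam Hv : ℝ) (hHw : 0 < Hw) (hw : Hw ≤ Hwb) (hl : 0 ≤ Hlam) (hv : 0 ≤ Hv)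
    (j : Fin n)
    (D : Measure (ValB n m Hv)) [IsProbabilityMeasure D] :
    radComp D (LjClass n m Hw Hwb Hlam Hv j) N ≤
      ((n : ℝ) + 1) ^ m * max Hv 1 * ((n : ℝ) * Hwb + Hlam) / Hw *
        Real.sqrt (2 * Real.log ((n : ℝ) * 2 ^ m + 1) / N) := by
  have hlog : 1 ≤ 2 * Real.log ((n : ℝ) * 2 ^ m + 1) := by
    have h2 : (2 : ℝ) ≤ n * 2 ^ m + 1 := by
      have : (1 : ℝ) ≤ n := by exact_mod_cast hn
      nlinarith [one_le_pow₀ (M₀ := ℝ) (n := m) one_le_two]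
    linarith [Real.log_le_log two_pos h2, Real.log_two_gt_d9]
  have hHwb : 0 ≤ Hwb := hHw.le.trans hw
  have hconst : (n * Hwb * Hv + Hlam) / Hw ≤ max Hv 1 * (n * Hwb + Hlam) / Hw := by
    gcongr
    nlinarith [mul_le_mul_of_nonneg_left (le_max_left Hv 1) (by positivity : (0 : ℝ) ≤ n * Hwb),
      mul_le_mul_of_nonneg_right (le_max_right Hv 1) hl]
  have hrate : (√N)⁻¹ ≤ √(2 * Real.log ((n : ℝ) * 2 ^ m + 1) / N) := by
    rw [← Real.sqrt_inv, inv_eq_one_div]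
    gcongr
  refine integral_le_of_forall_le_of_nonneg _
    (fun S => (empRad_LjClass_le hHw hw hl hv j S).trans ?_) (by positivity)
  rw [div_eq_mul_inv, mul_assoc _ (max Hv 1), mul_div_assoc]
  gcongr

/-- Rademacher complexity bound for the class `L_j`. -/
theorem stmt5 (n m N : ℕ) (hn : 1 ≤ n) (hm : 1 ≤ m) (hN : 1 ≤ N)
    (Hw Hwb Hlam Hv : ℝ) (hHw : 0 < Hw) (hw : Hw ≤ Hwb) (hl : 0 ≤ Hlam) (hv : 0 ≤ Hv)
    (j : Fin n)
    (D : Measure (ValB n m Hv)) [IsProbabilityMeasure D] :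
    radComp D (LjClass n m Hw Hwb Hlam Hv j) N ≤
      ((n : ℝ) + 1) ^ m * max Hv 1 * ((n : ℝ) * Hwb + Hlam) / Hw *
        Real.sqrt (2 * Real.log ((n : ℝ) * 2 ^ m + 1) / N) :=
  stmt5_general n m N hn Hw Hwb Hlam Hv hHw hw hl hv j D
end

section
/- For any n, m ≥ 2 and any γ ∈ (0,1), there exists a set V = {v^1, …, v^N} of N = n^m − n additive n-bidder, m-item valuation vectors (with all singleton values in {0,1}) such that for every subset H ⊆ V there exists a λ-auction A_H whose revenue satisfies rev_{A_H}(v^i) = 0 for every v^i ∉ H and rev_{A_H}(v^i) ≥ 2 − 2γ for every v^i ∈ H. -/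
open Finset MeasureTheory

/-!
Index the valuations by the non-constant maps `g` from items to bidders (there are `n^m - n`
of them): under `assignVal g` bidder `i` values exactly the items `j` with `g j = i`, at `1`
each. Given `H`, boost every allocation `ofFun g` with `g ∈ H` by `γ - 1` and all others by `0`.
The efficient allocation `ofFun g` loses at most `1 - γ < 1` to the boosts, so it is always
chosen. For `g ∉ H` it also maximizes the boosted welfare of every group of other bidders, so all
payments vanish. For `g ∈ H`, without a winning bidder the seller may withhold his bundle: the
others keep their welfare and, an item being unallocated, the boost `γ - 1` is escaped, so he pays
at least `1 - γ`; since `g` is non-constant there are two winners.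
-/

namespace Alloc

variable {n m : ℕ}

def ofFun (g : Fin m → Fin n) : Alloc n m :=
  ⟨fun i => {j | g j = i}, fun i i' hii' => by
    ext j
    simp only [mem_inter, mem_filter, mem_univ, true_and, notMem_empty, iff_false]
    rintro ⟨rfl, rfl⟩
    exact hii' rfl⟩

@[simp]
lemma mem_ofFun {g : Fin m → Fin n} {i : Fin n} {j : Fin m} : j ∈ (ofFun g).1 i ↔ g j = i := by
  simp [ofFun]

lemma ofFun_injective : Function.Injective (ofFun : (Fin m → Fin n) → Alloc n m) := by
  intro g g' h
  funext j
  have hj : j ∈ (ofFun g).1 (g j) := mem_ofFun.2 rfl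
  rw [h, mem_ofFun] at hj
  exact hj.symm

lemma eq_ofFun_of_forall_mem {o : Alloc n m} {g : Fin m → Fin n} (h : ∀ j, j ∈ o.1 (g j)) :
    o = ofFun g := by
  refine Subtype.ext (funext fun i => Finset.ext fun j => ?_)
  rw [mem_ofFun]
  refine ⟨fun hj => ?_, fun hj => hj ▸ h j⟩
  by_contra hne
  have hj' : j ∈ o.1 i ∩ o.1 (g j) := mem_inter.2 ⟨hj, h j⟩
  rw [o.2 i (g j) (Ne.symm hne)] at hj'
  exact notMem_empty j hj'

def withhold (o : Alloc n m) (k : Fin n) : Alloc n m :=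
  ⟨fun i => if i = k then ∅ else o.1 i, fun i i' hii' => by
    dsimp only
    split_ifs <;> simp [o.2 i i' hii']⟩

lemma withhold_apply_of_ne (o : Alloc n m) {i k : Fin n} (h : i ≠ k) :
    (o.withhold k).1 i = o.1 i :=
  if_neg h

lemma withhold_ne_ofFun {o : Alloc n m} {k : Fin n} {j : Fin m} (hj : j ∈ o.1 k)
    (g : Fin m → Fin n) : o.withhold k ≠ ofFun g := by
  intro h
  have hj' : j ∈ (o.withhold k).1 (g j) := h ▸ mem_ofFun.2 rfl
  by_cases hk : g j = k
  · simp [withhold, hk] at hj'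
  · rw [withhold_apply_of_ne o hk] at hj'
    have hmem : j ∈ o.1 (g j) ∩ o.1 k := mem_inter.2 ⟨hj', hj⟩
    rw [o.2 _ _ hk] at hmem
    exact notMem_empty j hmem

end Alloc

section AssignVal

variable {n m : ℕ}

def assignVal (g : Fin m → Fin n) : Fin n → Finset (Fin m) → ℝ :=
  fun i b => ∑ j ∈ b, if g j = i then 1 else 0

lemma assignVal_singleton (g : Fin m → Fin n) (i : Fin n) (j : Fin m) :
    assignVal g i {j} = if g j = i then 1 else 0 :=
  sum_singleton _ _

lemma additiveVal_assignVal (g : Fin m → Fin n) : AdditiveVal (assignVal g) := fun i _ =>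
  sum_congr rfl fun j _ => (assignVal_singleton g i j).symm

lemma assignVal_singleton_eq_zero_or_one (g : Fin m → Fin n) (i : Fin n) (j : Fin m) :
    assignVal g i {j} = 0 ∨ assignVal g i {j} = 1 := by
  rw [assignVal_singleton]
  split_ifs <;> simp

lemma assignVal_injective : Function.Injective (assignVal : (Fin m → Fin n) → _) := by
  intro g g' h
  funext j
  have hj := congrFun (congrFun h (g j)) {j}
  simp only [assignVal_singleton, if_true] at hj
  split_ifs at hj with hg
  · exact hg.symm
  · norm_num at hj

lemma assignVal_eq_card (g : Fin m → Fin n) (i : Fin n) (b : Finset (Fin m)) :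
    assignVal g i b = #{j ∈ b | g j = i} := by
  simp [assignVal, sum_boole]

lemma assignVal_le_ofFun (g : Fin m → Fin n) (i : Fin n) (b : Finset (Fin m)) :
    assignVal g i b ≤ assignVal g i ((Alloc.ofFun g).1 i) := by
  simp only [assignVal_eq_card, Nat.cast_le]
  exact card_le_card fun j hj => by simp_all

lemma assignVal_add_one_le_ofFun (g : Fin m → Fin n) {b : Finset (Fin m)} {j : Fin m}
    (hj : j ∉ b) : assignVal g (g j) b + 1 ≤ assignVal g (g j) ((Alloc.ofFun g).1 (g j)) := by
  simp only [assignVal_eq_card]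
  norm_cast
  refine card_lt_card ⟨fun j' hj' => by simp_all, fun hsub => hj ?_⟩
  exact (mem_filter.1 (hsub (by simp))).1

lemma sum_assignVal_add_one_le_ofFun (g : Fin m → Fin n) {o : Alloc n m}
    (ho : o ≠ Alloc.ofFun g) :
    ∑ i, assignVal g i (o.1 i) + 1 ≤ ∑ i, assignVal g i ((Alloc.ofFun g).1 i) := by
  obtain ⟨j, hj⟩ : ∃ j, j ∉ o.1 (g j) := by
    by_contra! h
    exact ho (Alloc.eq_ofFun_of_forall_mem h)
  have hsplit (v : Fin n → ℝ) : ∑ i, v i = v (g j) + ∑ i ∈ univ.erase (g j), v i :=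
    (add_sum_erase _ _ (mem_univ _)).symm
  rw [hsplit, hsplit fun i => assignVal g i ((Alloc.ofFun g).1 i)]
  have hrest := sum_le_sum fun i (_ : i ∈ univ.erase (g j)) => assignVal_le_ofFun g i (o.1 i)
  linarith [assignVal_add_one_le_ofFun g hj]

end AssignVal

section LamAuction

variable {n m : ℕ}

lemma le_allocMax (f : Alloc n m → ℝ) (o : Alloc n m) : f o ≤ allocMax f :=
  le_sup' f (mem_univ o)

lemma allocMax_le {f : Alloc n m → ℝ} {c : ℝ} (h : ∀ o, f o ≤ c) : allocMax f ≤ c :=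
  sup'_le _ _ fun o _ => h o

noncomputable def lamPayment (lam : Alloc n m → ℝ) (v : Fin n → Finset (Fin m) → ℝ)
    (os : Alloc n m) (j : Fin n) : ℝ :=
  allocMax (fun o => (∑ l ∈ univ.erase j, v l (o.1 l)) + lam o)
    - ((∑ l ∈ univ.erase j, v l (os.1 l)) + lam os)

lemma amaRev_one (lam : Alloc n m → ℝ) (v : Fin n → Finset (Fin m) → ℝ) (os : Alloc n m) :
    amaRev (fun _ => 1) lam v os = ∑ j, lamPayment lam v os j := by
  simp only [amaRev, lamPayment, inv_one, one_mul]

lemma sub_le_lamPayment (lam : Alloc n m → ℝ) (v : Fin n → Finset (Fin m) → ℝ)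
    (os : Alloc n m) (j : Fin n) (o : Alloc n m) :
    (∑ l ∈ univ.erase j, v l (o.1 l)) + lam o - ((∑ l ∈ univ.erase j, v l (os.1 l)) + lam os)
      ≤ lamPayment lam v os j :=
  sub_le_sub_right (le_allocMax (fun o => (∑ l ∈ univ.erase j, v l (o.1 l)) + lam o) o) _

lemma lamPayment_nonneg (lam : Alloc n m → ℝ) (v : Fin n → Finset (Fin m) → ℝ)
    (os : Alloc n m) (j : Fin n) : 0 ≤ lamPayment lam v os j := by
  simpa using sub_le_lamPayment lam v os j os

lemma lamPayment_eq_zero {lam : Alloc n m → ℝ} {v : Fin n → Finset (Fin m) → ℝ}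
    {os : Alloc n m} {j : Fin n}
    (h : ∀ o, (∑ l ∈ univ.erase j, v l (o.1 l)) + lam o
      ≤ (∑ l ∈ univ.erase j, v l (os.1 l)) + lam os) :
    lamPayment lam v os j = 0 :=
  sub_eq_zero_of_eq (le_antisymm (allocMax_le h)
    (le_allocMax (fun o => (∑ l ∈ univ.erase j, v l (o.1 l)) + lam o) os))

end LamAuction

section Boost

variable {n m : ℕ}

noncomputable def boost (S : Set (Fin m → Fin n)) (γ : ℝ) : Alloc n m → ℝ :=
  (Alloc.ofFun '' S).indicator fun _ => γ - 1

variable {S : Set (Fin m → Fin n)} {γ : ℝ} {g : Fin m → Fin n}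

lemma boost_ofFun_of_mem (hg : g ∈ S) : boost S γ (Alloc.ofFun g) = γ - 1 :=
  Set.indicator_of_mem (Set.mem_image_of_mem _ hg) _

lemma boost_ofFun_of_notMem (hg : g ∉ S) : boost S γ (Alloc.ofFun g) = 0 :=
  Set.indicator_of_notMem (Alloc.ofFun_injective.mem_set_image.not.2 hg) _

lemma boost_withhold {o : Alloc n m} {k : Fin n} {j : Fin m} (hj : j ∈ o.1 k) :
    boost S γ (o.withhold k) = 0 :=
  Set.indicator_of_notMem (by rintro ⟨g', -, h⟩; exact Alloc.withhold_ne_ofFun hj g' h.symm) _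

lemma boost_nonpos (hγ : γ ≤ 1) (o : Alloc n m) : boost S γ o ≤ 0 :=
  Set.indicator_nonpos (fun _ _ => by linarith) o

lemma sub_one_le_boost (hγ : γ ≤ 1) (o : Alloc n m) : γ - 1 ≤ boost S γ o := by
  unfold boost
  by_cases ho : o ∈ Alloc.ofFun '' S
  · rw [Set.indicator_of_mem ho]
  · rw [Set.indicator_of_notMem ho]
    linarith

lemma eq_ofFun_of_isMaxAlloc_boost (hγ0 : 0 < γ) (hγ1 : γ ≤ 1) {os : Alloc n m}
    (hos : IsMaxAlloc (fun _ => 1) (boost S γ) (assignVal g) os) : os = Alloc.ofFun g := by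
  by_contra hne
  have hmax := hos (Alloc.ofFun g)
  simp only [one_mul] at hmax
  linarith [sum_assignVal_add_one_le_ofFun g hne, boost_nonpos (S := S) hγ1 os,
    sub_one_le_boost (S := S) hγ1 (Alloc.ofFun g)]

lemma amaRev_boost_of_notMem (hγ : γ ≤ 1) (hg : g ∉ S) :
    amaRev (fun _ => 1) (boost S γ) (assignVal g) (Alloc.ofFun g) = 0 := by
  rw [amaRev_one]
  refine sum_eq_zero fun k _ => lamPayment_eq_zero fun o => ?_
  rw [boost_ofFun_of_notMem hg]
  linarith [boost_nonpos (S := S) hγ o,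
    sum_le_sum fun l (_ : l ∈ univ.erase k) => assignVal_le_ofFun g l (o.1 l)]

lemma one_sub_le_lamPayment_boost (hg : g ∈ S) (j : Fin m) :
    1 - γ ≤ lamPayment (boost S γ) (assignVal g) (Alloc.ofFun g) (g j) := by
  have hj : j ∈ (Alloc.ofFun g).1 (g j) := Alloc.mem_ofFun.2 rfl
  have hpay := sub_le_lamPayment (boost S γ) (assignVal g) (Alloc.ofFun g) (g j)
    ((Alloc.ofFun g).withhold (g j))
  rw [boost_withhold hj, boost_ofFun_of_mem hg,
    sum_congr rfl fun l hl => by rw [Alloc.withhold_apply_of_ne _ (ne_of_mem_erase hl)]] at hpay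
  linarith

lemma two_sub_two_mul_le_amaRev_boost (hg : g ∈ S) {j j' : Fin m} (hjj' : g j ≠ g j') :
    2 - 2 * γ ≤ amaRev (fun _ => 1) (boost S γ) (assignVal g) (Alloc.ofFun g) := by
  rw [amaRev_one]
  calc 2 - 2 * γ ≤ ∑ k ∈ {g j, g j'}, lamPayment (boost S γ) (assignVal g) (Alloc.ofFun g) k := by
        rw [sum_pair hjj']
        linarith [one_sub_le_lamPayment_boost (γ := γ) hg j,
          one_sub_le_lamPayment_boost (γ := γ) hg j']
    _ ≤ _ := sum_le_sum_of_subset_of_nonneg (subset_univ _) fun k _ _ => lamPayment_nonneg _ _ _ k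

end Boost

lemma ncard_setOf_nonconstant (α β : Type*) [Finite α] [Nonempty α] [Finite β] :
    {f : α → β | ∃ a a', f a ≠ f a'}.ncard = Nat.card β ^ Nat.card α - Nat.card β := by
  have hcompl : {f : α → β | ∃ a a', f a ≠ f a'} = (Set.range (Function.const α))ᶜ := by
    ext f
    simp only [Set.mem_ofPred_eq, Set.mem_compl_iff, Set.mem_range, not_exists]
    refine ⟨fun ⟨a, a', h⟩ b hb => h (by rw [← hb]; rfl), fun h => ?_⟩
    by_contra! hconst
    obtain ⟨a⟩ := ‹Nonempty α›
    exact h (f a) (funext fun a' => hconst a a')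
  rw [hcompl, Set.ncard_compl, Nat.card_fun, Set.ncard_range_of_injective Function.const_injective]

theorem stmt9_general (n m : ℕ) (hm : 2 ≤ m)
    (γ : ℝ) (hγ : γ ∈ Set.Ioo (0 : ℝ) 1) :
    ∃ vs : Fin (n ^ m - n) → (Fin n → Finset (Fin m) → ℝ),
      Function.Injective vs ∧
      (∀ ℓ, AdditiveVal (vs ℓ)) ∧
      (∀ ℓ i j, vs ℓ i {j} = 0 ∨ vs ℓ i {j} = 1) ∧
      ∀ H : Set (Fin (n ^ m - n)), ∃ lam : Alloc n m → ℝ,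
        ∀ ℓ, ∀ os : Alloc n m, IsMaxAlloc (fun _ => 1) lam (vs ℓ) os →
          (ℓ ∈ H → 2 - 2 * γ ≤ amaRev (fun _ => 1) lam (vs ℓ) os) ∧
          (ℓ ∉ H → amaRev (fun _ => 1) lam (vs ℓ) os = 0) := by
  obtain ⟨hγ0, hγ1⟩ := hγ
  have : Nonempty (Fin m) := ⟨⟨0, by omega⟩⟩
  let e : Fin (n ^ m - n) ≃ {g : Fin m → Fin n | ∃ j j', g j ≠ g j'} :=
    (Finite.equivFinOfCardEq (by
      rw [Nat.card_coe_set_eq, ncard_setOf_nonconstant, Nat.card_fin, Nat.card_fin])).symm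
  have he : Function.Injective fun ℓ => (e ℓ).1 := Subtype.val_injective.comp e.injective
  refine ⟨fun ℓ => assignVal (e ℓ).1, assignVal_injective.comp he,
    fun ℓ => additiveVal_assignVal _, fun ℓ => assignVal_singleton_eq_zero_or_one _,
    fun H => ⟨boost ((fun ℓ => (e ℓ).1) '' H) γ, fun ℓ os hos => ?_⟩⟩
  obtain rfl := eq_ofFun_of_isMaxAlloc_boost hγ0 hγ1.le hos
  obtain ⟨j, j', hjj'⟩ := (e ℓ).2
  exact ⟨fun hℓ => two_sub_two_mul_le_amaRev_boost (Set.mem_image_of_mem _ hℓ) hjj',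
    fun hℓ => amaRev_boost_of_notMem hγ1.le (he.mem_set_image.not.2 hℓ)⟩

/-- For any `n, m ≥ 2` and `γ ∈ (0,1)`, there is a set of
`n^m − n` additive valuation vectors with singleton values in `{0,1}` such that
for every subset `H` there is a `λ`-auction with revenue `0` outside `H` and
revenue at least `2 − 2γ` on `H`. -/
theorem stmt9 (n m : ℕ) (hn : 2 ≤ n) (hm : 2 ≤ m)
    (γ : ℝ) (hγ : γ ∈ Set.Ioo (0 : ℝ) 1) :
    ∃ vs : Fin (n ^ m - n) → (Fin n → Finset (Fin m) → ℝ),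
      Function.Injective vs ∧
      (∀ ℓ, AdditiveVal (vs ℓ)) ∧
      (∀ ℓ i j, vs ℓ i {j} = 0 ∨ vs ℓ i {j} = 1) ∧
      ∀ H : Set (Fin (n ^ m - n)), ∃ lam : Alloc n m → ℝ,
        ∀ ℓ, ∀ os : Alloc n m, IsMaxAlloc (fun _ => 1) lam (vs ℓ) os →
          (ℓ ∈ H → 2 - 2 * γ ≤ amaRev (fun _ => 1) lam (vs ℓ) os) ∧
          (ℓ ∉ H → amaRev (fun _ => 1) lam (vs ℓ) os = 0) :=
  stmt9_general n m hm γ hγ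
end

section
/- In the construction described in the context, if v^ℓ ∉ H, then the revenue of the λ-auction A_H on v^ℓ is 0. -/
open Finset MeasureTheory

instance (n m : ℕ) : DecidableEq (Alloc n m) :=
  fun a b => decidable_of_iff (a.1 = b.1) Subtype.ext_iff.symm

/-- An allocation in which all `m` items are allocated and no single bidder
receives all the items. -/
def SpecialAlloc {n m : ℕ} (o : Alloc n m) : Prop :=
  (∀ j : Fin m, ∃ i, j ∈ o.1 i) ∧ ∀ i, o.1 i ≠ Finset.univ

/-- The additive valuation vector associated with the allocation `o`: bidder `i`
values item `j` at `1` exactly when `j` belongs to the bundle `o.1 i`. -/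
def vOf {n m : ℕ} (o : Alloc n m) : Fin n → Finset (Fin m) → ℝ :=
  fun i b => ((b ∩ o.1 i).card : ℝ)

/-!
Bidder `l` values a bundle `b` under `v^õ` at `|b ∩ õ_l|`, so `õ` gives every bidder their
favourite bundle, and since `õ ∉ H` it also carries the largest boost `1 - γ`. Hence `õ`
maximizes the boosted welfare of every subset of bidders. Any welfare maximizer must then
match `õ` term by term, so each bidder's externality, and with it each payment, is zero.
-/

section Dominant

variable {n m : ℕ}

lemma allocMax_eq_of_forall_le {f : Alloc n m → ℝ} {o₀ : Alloc n m}
    (h : ∀ o, f o ≤ f o₀) : allocMax f = f o₀ :=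
  le_antisymm (sup'_le _ _ fun o _ => h o) (le_sup' f (mem_univ o₀))

variable {w : Fin n → ℝ} {lam : Alloc n m → ℝ} {v : Fin n → Finset (Fin m) → ℝ}
  {o₀ os : Alloc n m}

lemma IsMaxAlloc.eq_of_dominant (hos : IsMaxAlloc w lam v os) (hw : ∀ l, 0 ≤ w l)
    (hv : ∀ (o : Alloc n m) l, v l (o.1 l) ≤ v l (o₀.1 l)) (hlam : ∀ o, lam o ≤ lam o₀) :
    (∀ l, w l * v l (os.1 l) = w l * v l (o₀.1 l)) ∧ lam os = lam o₀ := by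
  have hle : ∀ l ∈ univ, w l * v l (os.1 l) ≤ w l * v l (o₀.1 l) :=
    fun l _ => mul_le_mul_of_nonneg_left (hv os l) (hw l)
  have hsum : ∑ l, w l * v l (os.1 l) = ∑ l, w l * v l (o₀.1 l) :=
    le_antisymm (sum_le_sum hle) (by linarith [hos o₀, hlam os])
  refine ⟨fun l => (sum_eq_sum_iff_of_le hle).mp hsum l (mem_univ l), ?_⟩
  linarith [hos o₀, hlam os]

lemma amaRev_eq_zero_of_dominant (hos : IsMaxAlloc w lam v os) (hw : ∀ l, 0 ≤ w l)
    (hv : ∀ (o : Alloc n m) l, v l (o.1 l) ≤ v l (o₀.1 l)) (hlam : ∀ o, lam o ≤ lam o₀) :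
    amaRev w lam v os = 0 := by
  obtain ⟨hvos, hlamos⟩ := hos.eq_of_dominant hw hv hlam
  refine sum_eq_zero fun j _ => ?_
  have hmax := allocMax_eq_of_forall_le (o₀ := o₀)
    (f := fun o => (∑ l ∈ univ.erase j, w l * v l (o.1 l)) + lam o) fun o =>
      add_le_add (sum_le_sum fun l _ => mul_le_mul_of_nonneg_left (hv o l) (hw l)) (hlam o)
  simp only [hmax, hvos, hlamos, sub_self, mul_zero]

end Dominant

lemma vOf_le_vOf_self {n m : ℕ} (ot : Alloc n m) (l : Fin n) (b : Finset (Fin m)) :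
    vOf ot l b ≤ vOf ot l (ot.1 l) := by
  simp only [vOf, inter_self]
  exact_mod_cast card_le_card inter_subset_right

theorem stmt11_general (n m : ℕ)
    (γ : ℝ) (hγ : γ ∈ Set.Ioo (0 : ℝ) 1)
    (H : Finset (Alloc n m))
    (ot : Alloc n m) (hot : ot ∉ H)
    (os : Alloc n m)
    (hos : IsMaxAlloc (fun _ => 1) (fun o => if o ∈ H then 0 else 1 - γ) (vOf ot) os) :
    amaRev (fun _ => 1) (fun o => if o ∈ H then 0 else 1 - γ) (vOf ot) os = 0 := by
  have hboost : ∀ o : Alloc n m,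
      (if o ∈ H then 0 else 1 - γ) ≤ if ot ∈ H then (0 : ℝ) else 1 - γ := by
    intro o
    split_ifs <;> linarith [hγ.2]
  exact amaRev_eq_zero_of_dominant hos (fun _ => zero_le_one)
    (fun o l => vOf_le_vOf_self ot l (o.1 l)) hboost

/-- In the lower-bound construction for `λ`-auctions, if
`õ ∉ H` then the revenue of the auction `A_H` on `v^õ` is `0`. -/
theorem stmt11 (n m : ℕ) (hn : 2 ≤ n) (hm : 2 ≤ m)
    (γ : ℝ) (hγ : γ ∈ Set.Ioo (0 : ℝ) 1)
    (H : Finset (Alloc n m)) (hH : ∀ o ∈ H, SpecialAlloc o)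
    (ot : Alloc n m) (hsp : SpecialAlloc ot) (hot : ot ∉ H)
    (os : Alloc n m)
    (hos : IsMaxAlloc (fun _ => 1) (fun o => if o ∈ H then 0 else 1 - γ) (vOf ot) os) :
    amaRev (fun _ => 1) (fun o => if o ∈ H then 0 else 1 - γ) (vOf ot) os = 0 :=
  stmt11_general n m γ hγ H ot hot os hos
end

section
/- For any even m ≥ 2 and any γ ∈ (0,1), there exists a set V = {v^1, …, v^N} of N = binomial(m, m/2) single-bidder, m-item valuation functions such that for every subset H ⊆ V there exists a monotone function of bundle reserve prices r : 2^[m] → ℝ_{≥0} (i.e., r(b) ≤ r(b') whenever b ⊆ b') for which the resulting single-bidder auction with bundle reserve prices has revenue 1 − γ on every v^ℓ ∈ H and revenue 0 on every v^ℓ ∉ H. -/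
/-!
Write `m = 2k` and index the valuations by the `k`-subsets `S` of the items: `v_S(b) = 1` if
`S ⊆ b` and `0` otherwise. Given `H`, price bundles of fewer than `k` items at `0`, the
complements `Sᶜ` of the members of `H` at `γ`, and every other bundle at `1`; this is monotone
because the `γ`-priced bundles form an antichain sitting right above the `0`-priced ones.
Since `r(univ) = 1` the maximal price is `1`. Against `v_S`, giving the bidder `S` yields
`r(Sᶜ) + 1`. If `S ∈ H` this is `1 + γ > 1`, which forces the bidder to get all of `S` and the
seller a bundle of price `≥ γ > 0` inside `Sᶜ`, i.e. exactly `Sᶜ`: revenue `1 - γ`. If `S ∉ H`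
it is `2`, which forces the seller's bundle to have price `1`: revenue `0`.
-/

open Finset MeasureTheory

section SingleMinded

variable {α : Type*} [DecidableEq α]

def singleMindedVal (S b : Finset α) : ℝ :=
  if S ⊆ b then 1 else 0

lemma singleMindedVal_le_one (S b : Finset α) : singleMindedVal S b ≤ 1 := by
  unfold singleMindedVal; split_ifs <;> norm_num

lemma singleMindedVal_self (S : Finset α) : singleMindedVal S S = 1 :=
  if_pos subset_rfl

lemma singleMindedVal_empty {S : Finset α} (hS : S.Nonempty) : singleMindedVal S ∅ = 0 :=
  if_neg fun h => hS.ne_empty (subset_empty.mp h)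

lemma singleMindedVal_eq_one_iff {S b : Finset α} : singleMindedVal S b = 1 ↔ S ⊆ b := by
  unfold singleMindedVal; split_ifs with h <;> simp [h]

lemma singleMindedVal_injective : Function.Injective (singleMindedVal (α := α)) := by
  intro S T h
  apply subset_antisymm <;> rw [← singleMindedVal_eq_one_iff]
  · rw [h, singleMindedVal_self]
  · rw [← h, singleMindedVal_self]

end SingleMinded

/-- The bidder receives `o₁` and the seller keeps `o₁ᶜ`, which it values at its reserve price. -/
def IsOptimalBundle {α : Type*} [Fintype α] [DecidableEq α] (r v : Finset α → ℝ)
    (o₁ : Finset α) : Prop :=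
  ∀ o, r oᶜ + v o ≤ r o₁ᶜ + v o₁

section ReservePrice

variable {α : Type*}

open Classical in
noncomputable def reservePrice (c : ℕ) (A : Set (Finset α)) (γ : ℝ) (b : Finset α) : ℝ :=
  if b.card < c then 0 else if b ∈ A then γ else 1

variable {c : ℕ} {A : Set (Finset α)} {γ : ℝ}

lemma reservePrice_nonneg (hγ : 0 ≤ γ) (b : Finset α) : 0 ≤ reservePrice c A γ b := by
  unfold reservePrice; split_ifs <;> norm_num [hγ]

lemma reservePrice_le_one (hγ : γ ≤ 1) (b : Finset α) : reservePrice c A γ b ≤ 1 := by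
  unfold reservePrice; split_ifs <;> norm_num [hγ]

lemma reservePrice_of_card_lt {b : Finset α} (hb : b.card < c) : reservePrice c A γ b = 0 :=
  if_pos hb

lemma reservePrice_of_mem (hA : ∀ a ∈ A, a.card = c) {b : Finset α} (hb : b ∈ A) :
    reservePrice c A γ b = γ := by
  classical
  rw [reservePrice, if_neg (hA b hb).not_lt, if_pos hb]

lemma reservePrice_of_notMem {b : Finset α} (hcb : c ≤ b.card) (hb : b ∉ A) :
    reservePrice c A γ b = 1 := by
  classical
  rw [reservePrice, if_neg hcb.not_gt, if_neg hb]

lemma reservePrice_mono (hγ0 : 0 ≤ γ) (hγ1 : γ ≤ 1) (hA : ∀ a ∈ A, a.card = c) :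
    Monotone (reservePrice c A γ) := by
  intro b b' hbb'
  have hcard : b.card ≤ b'.card := card_le_card hbb'
  by_cases hb : b.card < c
  · rw [reservePrice_of_card_lt hb]
    exact reservePrice_nonneg hγ0 b'
  by_cases hb' : b' ∈ A
  · have hbb : b = b' := eq_of_subset_of_card_le hbb' (by rw [hA b' hb']; omega)
    rw [hbb]
  · rw [reservePrice_of_notMem (by omega) hb']
    exact reservePrice_le_one hγ1 b

lemma sup'_reservePrice [Fintype α] (hγ1 : γ ≤ 1) (hA : ∀ a ∈ A, a.card = c)
    (hc : c < Fintype.card α) :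
    univ.sup' univ_nonempty (reservePrice c A γ) = 1 := by
  have huniv : (univ : Finset α) ∉ A := fun h => by
    have := hA _ h
    rw [card_univ] at this
    omega
  refine le_antisymm (sup'_le _ _ fun b _ => reservePrice_le_one hγ1 b) ?_
  have hcu : c ≤ (univ : Finset α).card := by rw [card_univ]; omega
  exact (reservePrice_of_notMem hcu huniv).symm.le.trans (le_sup' _ (mem_univ _))

lemma reservePrice_compl_of_isOptimalBundle_of_mem [Fintype α] [DecidableEq α]
    (hγ0 : 0 < γ) (hγ1 : γ < 1) (hA : ∀ a ∈ A, a.card = c) {S o₁ : Finset α}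
    (hS : Sᶜ ∈ A)
    (hopt : IsOptimalBundle (reservePrice c A γ) (singleMindedVal S) o₁) :
    reservePrice c A γ o₁ᶜ = γ := by
  have hSγ : reservePrice c A γ Sᶜ = γ := reservePrice_of_mem hA hS
  have hfromS := hopt S
  rw [hSγ, singleMindedVal_self] at hfromS
  have hr1 := reservePrice_le_one (c := c) (A := A) hγ1.le o₁ᶜ
  have hSo₁ : S ⊆ o₁ := by
    by_contra h
    rw [singleMindedVal, if_neg h] at hfromS
    linarith
  rw [singleMindedVal, if_pos hSo₁] at hfromS
  have hsub : o₁ᶜ ⊆ Sᶜ := compl_subset_compl.mpr hSo₁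
  have hcard : c ≤ o₁ᶜ.card := by
    by_contra h
    rw [reservePrice_of_card_lt (not_le.mp h)] at hfromS
    linarith
  have heq : o₁ᶜ = Sᶜ := eq_of_subset_of_card_le hsub (by rw [hA _ hS]; exact hcard)
  rw [heq, hSγ]

lemma reservePrice_compl_of_isOptimalBundle_of_notMem [Fintype α] [DecidableEq α]
    (hγ1 : γ ≤ 1) {S o₁ : Finset α} (hcS : c ≤ Sᶜ.card) (hS : Sᶜ ∉ A)
    (hopt : IsOptimalBundle (reservePrice c A γ) (singleMindedVal S) o₁) :
    reservePrice c A γ o₁ᶜ = 1 := by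
  have hfromS := hopt S
  rw [reservePrice_of_notMem hcS hS, singleMindedVal_self] at hfromS
  have := singleMindedVal_le_one S o₁
  exact le_antisymm (reservePrice_le_one hγ1 _) (by linarith)

end ReservePrice

lemma card_compl_of_card_eq_half {m : ℕ} (hme : Even m) {S : Finset (Fin m)}
    (hS : S.card = m / 2) : Sᶜ.card = m / 2 := by
  obtain ⟨t, rfl⟩ := hme
  rw [card_compl, Fintype.card_fin, hS]
  omega

/-- For any even `m ≥ 2` and `γ ∈ (0,1)`, there is a set of
`C(m, m/2)` single-bidder, `m`-item valuation functions such that for every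
subset `H` there are monotone nonnegative bundle reserve prices `r` for which the
single-bidder auction with bundle reserve prices has revenue `1 − γ` on every
member of `H` and revenue `0` on every non-member. The bidder's allocated bundle
`o₁` maximizes `r(o₁ᶜ) + v(o₁)`, and the revenue is `max_b r(b) − r(o₁ᶜ)`. -/
theorem stmt19 (m : ℕ) (hm : 2 ≤ m) (hme : Even m)
    (γ : ℝ) (hγ : γ ∈ Set.Ioo (0 : ℝ) 1) :
    ∃ vs : Fin (Nat.choose m (m / 2)) → (Finset (Fin m) → ℝ),
      Function.Injective vs ∧
      (∀ ℓ, vs ℓ ∅ = 0) ∧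
      ∀ H : Set (Fin (Nat.choose m (m / 2))),
        ∃ r : Finset (Fin m) → ℝ,
          (∀ b, 0 ≤ r b) ∧
          (∀ b b' : Finset (Fin m), b ⊆ b' → r b ≤ r b') ∧
          ∀ ℓ, ∀ o1 : Finset (Fin m),
            (∀ o' : Finset (Fin m), r o'ᶜ + vs ℓ o' ≤ r o1ᶜ + vs ℓ o1) →
              ((ℓ ∈ H → Finset.univ.sup' Finset.univ_nonempty r - r o1ᶜ = 1 - γ) ∧
               (ℓ ∉ H → Finset.univ.sup' Finset.univ_nonempty r - r o1ᶜ = 0)) := by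
  obtain ⟨hγ0, hγ1⟩ := hγ
  let e := (equivFinOfCardEq (by simp [card_powersetCard] :
    (powersetCard (m / 2) (univ : Finset (Fin m))).card = m.choose (m / 2))).symm
  let S : Fin (m.choose (m / 2)) → Finset (Fin m) := fun ℓ => e ℓ
  have hS : ∀ ℓ, (S ℓ).card = m / 2 := fun ℓ => mem_powersetCard_univ.mp (e ℓ).2
  have hSinj : Function.Injective S := Subtype.val_injective.comp e.injective
  have hSc : Function.Injective fun ℓ => (S ℓ)ᶜ := compl_injective.comp hSinj
  refine ⟨fun ℓ => singleMindedVal (S ℓ), singleMindedVal_injective.comp hSinj,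
    fun ℓ => singleMindedVal_empty (card_pos.mp (by rw [hS]; omega)), fun H => ?_⟩
  let A : Set (Finset (Fin m)) := (fun ℓ => (S ℓ)ᶜ) '' H
  have hA : ∀ a ∈ A, a.card = m / 2 := by
    rintro _ ⟨ℓ, -, rfl⟩
    exact card_compl_of_card_eq_half hme (hS ℓ)
  refine ⟨reservePrice (m / 2) A γ, reservePrice_nonneg hγ0.le,
    fun b b' => (reservePrice_mono hγ0.le hγ1.le hA ·), fun ℓ o₁ hopt => ?_⟩
  rw [sup'_reservePrice hγ1.le hA (by rw [Fintype.card_fin]; omega)]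
  refine ⟨fun hℓ => ?_, fun hℓ => ?_⟩
  · rw [reservePrice_compl_of_isOptimalBundle_of_mem hγ0 hγ1 hA (Set.mem_image_of_mem _ hℓ) hopt]
  · rw [reservePrice_compl_of_isOptimalBundle_of_notMem hγ1.le
      (card_compl_of_card_eq_half hme (hS ℓ)).ge (hSc.mem_set_image.not.mpr hℓ) hopt, sub_self]
end
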